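/- arXiv:1306.1915 — 2 statements merged into one kernel-verified Lean document; each statement's English description precedes it below -/
import Mathlib

section
/- Let D be a C*-algebra, A and B C*-subalgebras of D, and E_B : D → B a conditional expectation. Then for all x, y ∈ A, ‖E_B(xy) − E_B(x)E_B(y)‖ ≤ 6·d(A,B)·‖x‖·‖y‖. -/
/-- The Kadison–Kastler distance between two subsets of a C*-algebra:
the Hausdorff distance between their closed unit balls. -/
noncomputable def KKdist {D : Type*} [NonUnitalNormedRing D] (A B : Set D) : ℝ :=
  Metric.hausdorffDist (A ∩ Metric.closedBall 0 1) (B ∩ Metric.closedBall 0 1)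

/-- A conditional expectation of a C*-algebra `D` onto a C*-subalgebra `A` (given as a subset):
a contractive positive `A`-bimodule projection of `D` onto `A`.  Positivity is expressed by
saying that the image of a positive element is positive, i.e. of the form `y* y`. -/
structure ConditionalExpectation (D : Type*) [NonUnitalNormedRing D] [StarRing D]
    [Module ℂ D] (A : Set D) where
  toFun : D →ₗ[ℂ] D
  mem_range : ∀ x, toFun x ∈ A
  map_fix : ∀ a ∈ A, toFun a = a
  map_mul_left : ∀ a ∈ A, ∀ x, toFun (a * x) = a * toFun x
  map_mul_right : ∀ a ∈ A, ∀ x, toFun (x * a) = toFun x * a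
  contractive : ∀ x, ‖toFun x‖ ≤ ‖x‖
  pos : ∀ x, ∃ y, toFun (star x * x) = star y * y

/-- `u : Fin N → D` is a quasi-basis for the conditional expectation `E`:
`b = ∑ i, u i * E (u i * b)` for every `b`. -/
def IsQuasiBasis {D : Type*} [NonUnitalNormedRing D] [StarRing D] [Module ℂ D]
    {A : Set D} (E : ConditionalExpectation D A) {N : ℕ} (u : Fin N → D) : Prop :=
  ∀ b : D, b = ∑ i, u i * E.toFun (star (u i) * b)


/-- For C*-subalgebras `A, B ⊆ D` and a conditional expectation `E_B : D → B`, one has the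
almost-multiplicativity estimate `‖E_B(xy) - E_B(x) E_B(y)‖ ≤ 6 d(A,B) ‖x‖ ‖y‖`
for all `x, y ∈ A`. -/
theorem stmt10 {D : Type*} [NormedRing D] [StarRing D] [CStarRing D]
    [NormedAlgebra ℂ D] [StarModule ℂ D] [CompleteSpace D]
    (A B : NonUnitalStarSubalgebra ℂ D)
    (hAclosed : IsClosed (A : Set D)) (hBclosed : IsClosed (B : Set D))
    (EB : ConditionalExpectation D (B : Set D)) :
    ∀ x ∈ A, ∀ y ∈ A,
      ‖EB.toFun (x * y) - EB.toFun x * EB.toFun y‖ ≤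
        6 * KKdist (A : Set D) (B : Set D) * ‖x‖ * ‖y‖ := by
  intro x hx y hy
  set d := KKdist (A : Set D) (B : Set D) with hd
  have hd0 : 0 ≤ d := Metric.hausdorffDist_nonneg
  have key : ∀ a ∈ A, ‖a - EB.toFun a‖ ≤ 2 * d * ‖a‖ := by
    intro a ha
    rcases eq_or_ne a 0 with rfl | hane
    · simp
    have hna : (0:ℝ) < ‖a‖ := norm_pos_iff.mpr hane
    set c : D := (‖a‖⁻¹ : ℂ) • a with hc
    have hcA : c ∈ A := A.smul_mem _ ha
    have hcn : ‖c‖ = 1 := by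
      rw [hc, norm_smul]
      simp [hna.ne']
    have hstep : ‖c - EB.toFun c‖ ≤ 2 * d := by
      have hmem : c ∈ (A : Set D) ∩ Metric.closedBall 0 1 := ⟨hcA, by simp [hcn]⟩
      have hBne : ((B : Set D) ∩ Metric.closedBall 0 1).Nonempty :=
        ⟨0, B.zero_mem, by simp⟩
      have hAne : ((A : Set D) ∩ Metric.closedBall 0 1).Nonempty := ⟨c, hmem⟩
      have hbddA : Bornology.IsBounded ((A : Set D) ∩ Metric.closedBall 0 1) :=
        Metric.isBounded_closedBall.subset Set.inter_subset_right
      have hbddB : Bornology.IsBounded ((B : Set D) ∩ Metric.closedBall 0 1) :=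
        Metric.isBounded_closedBall.subset Set.inter_subset_right
      have hfin : EMetric.hausdorffEdist ((A : Set D) ∩ Metric.closedBall 0 1)
          ((B : Set D) ∩ Metric.closedBall 0 1) ≠ ⊤ :=
        Metric.hausdorffEdist_ne_top_of_nonempty_of_bounded hAne hBne hbddA hbddB
      have hinf : Metric.infDist c ((B : Set D) ∩ Metric.closedBall 0 1) ≤ d :=
        Metric.infDist_le_hausdorffDist_of_mem hmem hfin
      refine le_of_forall_pos_le_add ?_
      intro ε hε
      have hlt : Metric.infDist c ((B : Set D) ∩ Metric.closedBall 0 1) < d + ε / 2 := by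
        linarith
      obtain ⟨b, hbmem, hbdist⟩ := (Metric.infDist_lt_iff hBne).mp hlt
      have hbB : b ∈ B := hbmem.1
      have hnb : ‖c - b‖ < d + ε / 2 := by
        rwa [dist_eq_norm] at hbdist
      have hEb : EB.toFun b = b := EB.map_fix b hbB
      have hsplit : c - EB.toFun c = (c - b) + EB.toFun (b - c) := by
        rw [map_sub, hEb]; abel
      calc ‖c - EB.toFun c‖ ≤ ‖c - b‖ + ‖EB.toFun (b - c)‖ := by
            rw [hsplit]; exact norm_add_le _ _
        _ ≤ ‖c - b‖ + ‖b - c‖ := by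
            have := EB.contractive (b - c); linarith
        _ = ‖c - b‖ + ‖c - b‖ := by rw [norm_sub_rev b c]
        _ ≤ 2 * d + ε := by linarith
    have hac : a = (‖a‖ : ℂ) • c := by
      rw [hc, smul_smul]
      have : (‖a‖ : ℂ) * (‖a‖⁻¹ : ℂ) = 1 := by
        rw [mul_inv_cancel₀]
        exact_mod_cast hna.ne'
      rw [this, one_smul]
    have : a - EB.toFun a = (‖a‖ : ℂ) • (c - EB.toFun c) := by
      conv_lhs => rw [hac]
      rw [map_smul, smul_sub]
    rw [this, norm_smul]
    have hn : ‖(‖a‖ : ℂ)‖ = ‖a‖ := by simp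
    rw [hn]
    calc ‖a‖ * ‖c - EB.toFun c‖ ≤ ‖a‖ * (2 * d) :=
          mul_le_mul_of_nonneg_left hstep hna.le
      _ = 2 * d * ‖a‖ := by ring
  have hEy : EB.toFun y ∈ B := EB.mem_range y
  have heq : EB.toFun (x * y) - EB.toFun x * EB.toFun y = EB.toFun (x * (y - EB.toFun y)) := by
    rw [mul_sub, map_sub, EB.map_mul_right (EB.toFun y) hEy x]
  rw [heq]
  have h1 : ‖EB.toFun (x * (y - EB.toFun y))‖ ≤ ‖x‖ * ‖y - EB.toFun y‖ :=
    (EB.contractive _).trans (norm_mul_le _ _)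
  have h2 : ‖y - EB.toFun y‖ ≤ 2 * d * ‖y‖ := key y hy
  have hx0 : (0:ℝ) ≤ ‖x‖ := norm_nonneg x
  have hy0 : (0:ℝ) ≤ ‖y‖ := norm_nonneg y
  nlinarith [mul_le_mul_of_nonneg_left h2 hx0, mul_nonneg (mul_nonneg hd0 hx0) hy0]
end

section
/- Let C ⊆ D be unital C*-algebras with a conditional expectation E_C^D : D → C of finite index, and let A, B be intermediate C*-subalgebras belonging to IMS(C,D,E_C^D), i.e., each admits a compatible conditional expectation from D. Then d(A,B) ≤ ‖Index E_C^D‖ · ‖e_A − e_B‖, where e_A, e_B are the Jones projections of A and B on the Hilbert C-module completion of D with inner product ⟨x,y⟩ = E_C^D(x*y). -/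
section Stmt14Aux

variable {D : Type*} [NormedRing D] [StarRing D] [CStarRing D]
    [NormedAlgebra ℂ D] [StarModule ℂ D] [CompleteSpace D]

omit [CStarRing D] [CompleteSpace D] in
/-- A conditional expectation onto a star subalgebra is star-preserving. -/
lemma ConditionalExpectation.star_map' (C : StarSubalgebra ℂ D)
    (E : ConditionalExpectation D (C : Set D)) (x : D) :
    E.toFun (star x) = star (E.toFun x) := by
  have sa : ∀ z : D, star (E.toFun (star z * z)) = E.toFun (star z * z) := by
    intro z
    obtain ⟨y, hy⟩ := E.pos z
    rw [hy, star_mul, star_star]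
  have f1 : E.toFun 1 = 1 := E.map_fix 1 (one_mem C)
  have exp1 : star (x + 1) * (x + 1) = (star x * x + 1) + (star x + x) := by
    rw [star_add, star_one]; noncomm_ring
  have e1 := sa (x + 1)
  rw [exp1] at e1
  simp only [map_add, f1, star_add, star_one, sa x] at e1
  have h1 : star (E.toFun (star x)) + star (E.toFun x) = E.toFun (star x) + E.toFun x :=
    add_left_cancel e1
  have exp2 : star (x + Complex.I • 1) * (x + Complex.I • 1) =
      (star x * x + 1) + (Complex.I • star x - Complex.I • x) := by
    rw [star_add, star_smul, star_one, Complex.star_def, Complex.conj_I]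
    simp only [mul_add, add_mul, smul_mul_assoc, mul_smul_comm, smul_smul, smul_add, one_mul,
      mul_one, neg_mul, Complex.I_mul_I, neg_neg, one_smul, neg_smul, neg_one_smul]
    match_scalars <;> simp [Complex.I_sq]
  have e2 := sa (x + Complex.I • 1)
  rw [exp2] at e2
  simp only [map_add, map_sub, map_smul, f1, star_add, star_sub, star_one, star_smul,
    Complex.star_def, Complex.conj_I, sa x, neg_smul] at e2
  have h2 : -(Complex.I • star (E.toFun (star x))) - -(Complex.I • star (E.toFun x)) =
      Complex.I • E.toFun (star x) - Complex.I • E.toFun x := add_left_cancel e2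
  have h2' : star (E.toFun (star x)) - star (E.toFun x) = E.toFun x - E.toFun (star x) := by
    have h3 := congrArg (fun z => Complex.I • z) h2
    simp only [smul_sub, smul_neg, smul_smul, Complex.I_mul_I, neg_smul, one_smul, neg_neg] at h3
    rw [h3]; abel
  have hsum : (star (E.toFun (star x)) + star (E.toFun x)) +
      (star (E.toFun (star x)) - star (E.toFun x)) =
      (E.toFun (star x) + E.toFun x) + (E.toFun x - E.toFun (star x)) := by rw [h1, h2']
  have h2s : (2:ℂ) • star (E.toFun (star x)) = (2:ℂ) • E.toFun x := by
    rw [two_smul, two_smul]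
    calc star (E.toFun (star x)) + star (E.toFun (star x)) =
        (star (E.toFun (star x)) + star (E.toFun x)) +
          (star (E.toFun (star x)) - star (E.toFun x)) := by abel
      _ = (E.toFun (star x) + E.toFun x) + (E.toFun x - E.toFun (star x)) := hsum
      _ = E.toFun x + E.toFun x := by abel
  have hba : star (E.toFun (star x)) = E.toFun x := by
    have h4 := congrArg (fun z => ((2:ℂ)⁻¹) • z) h2s
    simpa [smul_smul] using h4
  simpa [star_star] using congrArg star hba

open scoped WithCStarModule InnerProductSpace in
/-- The Pimsner–Popa inequality in norm form, derived from a quasi-basis via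
Cauchy–Schwarz in the Hilbert C*-module `Fin N → D`. -/
lemma ConditionalExpectation.pimsner_popa' (C : StarSubalgebra ℂ D)
    (E : ConditionalExpectation D (C : Set D)) {N : ℕ}
    (u : Fin N → D) (hu : IsQuasiBasis E u) (x : D) :
    ‖x‖ ^ 2 ≤ ‖∑ i, u i * star (u i)‖ * ‖E.toFun (star x * x)‖ := by
  letI : CStarAlgebra D :=
    { ‹NormedRing D›, ‹StarRing D›, ‹CStarRing D›, ‹NormedAlgebra ℂ D›, ‹StarModule ℂ D›,
      ‹CompleteSpace D› with }
  letI : PartialOrder D := CStarAlgebra.spectralOrder D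
  haveI : StarOrderedRing D := CStarAlgebra.spectralOrderedRing D
  set c : Fin N → D := fun i => E.toFun (star (u i) * x) with hc
  have key : E.toFun (star x * x) = ∑ i, star (c i) * c i := by
    conv_lhs => rw [show star x * x = ∑ i, star x * (u i * c i) by
      rw [← Finset.mul_sum, ← hu x]]
    rw [map_sum]
    refine Finset.sum_congr rfl fun i _ => ?_
    rw [← mul_assoc, E.map_mul_right _ (E.mem_range _) _]
    congr 1
    rw [show star x * u i = star (star (u i) * x) by rw [star_mul, star_star],
      E.star_map' C]
  set V : C⋆ᵐᵒᵈ(D, ∀ _ : Fin N, D) := (WithCStarModule.equiv D _).symm u with hV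
  set W : C⋆ᵐᵒᵈ(D, ∀ _ : Fin N, D) := (WithCStarModule.equiv D _).symm (fun i => star (c i)) with hW
  have hVW : (inner D W V : D) = x := by
    rw [WithCStarModule.pi_inner]
    conv_rhs => rw [hu x]
    refine Finset.sum_congr rfl fun i _ => ?_
    rw [WithCStarModule.inner_def]
    simp [hV, hW, hc, WithCStarModule.equiv_symm_pi_apply]
  have cs := CStarModule.norm_inner_le (C⋆ᵐᵒᵈ(D, ∀ _ : Fin N, D)) (A := D) (x := W) (y := V)
  rw [hVW, mul_comm] at cs
  have hsV : ∑ i, (inner D (V i) (V i) : D) = ∑ i, u i * star (u i) :=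
    Finset.sum_congr rfl fun i _ => by
      rw [WithCStarModule.inner_def]
      simp [hV, WithCStarModule.equiv_symm_pi_apply]
  have hsW : ∑ i, (inner D (W i) (W i) : D) = ∑ i, star (c i) * c i :=
    Finset.sum_congr rfl fun i _ => by
      rw [WithCStarModule.inner_def]
      simp [hW, WithCStarModule.equiv_symm_pi_apply]
  have hnV : ‖V‖ = Real.sqrt ‖∑ i, u i * star (u i)‖ := by
    rw [WithCStarModule.pi_norm, hsV]
  have hnW : ‖W‖ = Real.sqrt ‖E.toFun (star x * x)‖ := by
    rw [WithCStarModule.pi_norm, hsW, ← key]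
  rw [hnV, hnW] at cs
  calc ‖x‖ ^ 2 ≤ (Real.sqrt ‖∑ i, u i * star (u i)‖ * Real.sqrt ‖E.toFun (star x * x)‖) ^ 2 := by
        gcongr
      _ = ‖∑ i, u i * star (u i)‖ * ‖E.toFun (star x * x)‖ := by
        rw [mul_pow, Real.sq_sqrt (norm_nonneg _), Real.sq_sqrt (norm_nonneg _)]

end Stmt14Aux

/-- For intermediate subalgebras `A, B ∈ IMS(C, D, E_C^D)` one has
`d(A,B) ≤ ‖Index E_C^D‖ ‖e_A - e_B‖`, where `e_A, e_B` are the Jones projections on the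
Hilbert `C`-module completion `𝓔` of `D` with inner product `⟪x,y⟫ = E_C^D(x* y)`.  The
operator norm `‖e_A - e_B‖` is expressed concretely as the supremum, over `x ∈ D` in the unit
ball of `𝓔` (i.e. with `√‖E_C^D(x* x)‖ ≤ 1`), of the `𝓔`-norm of `η(E_A^D x - E_B^D x)`,
using that `η(D)` is dense in `𝓔` and `e_A η(x) = η(E_A^D x)`. -/
theorem stmt14 {D : Type*} [NormedRing D] [StarRing D] [CStarRing D]
    [NormedAlgebra ℂ D] [StarModule ℂ D] [CompleteSpace D]
    (C A B : StarSubalgebra ℂ D) (hCA : C ≤ A) (hCB : C ≤ B)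
    (ECD : ConditionalExpectation D (C : Set D))
    (EAD : ConditionalExpectation D (A : Set D))
    (EBD : ConditionalExpectation D (B : Set D))
    (hA : ∀ x : D, ECD.toFun (EAD.toFun x) = ECD.toFun x)
    (hB : ∀ x : D, ECD.toFun (EBD.toFun x) = ECD.toFun x)
    {N : ℕ} (u : Fin N → D) (hu : IsQuasiBasis ECD u)
    (J : ℝ)
    (hJ : J = sSup {t : ℝ | ∃ x : D, Real.sqrt ‖ECD.toFun (star x * x)‖ ≤ 1 ∧
      t = Real.sqrt ‖ECD.toFun (star (EAD.toFun x - EBD.toFun x) *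
        (EAD.toFun x - EBD.toFun x))‖}) :
    KKdist (A : Set D) (B : Set D) ≤ ‖∑ i, u i * star (u i)‖ * J := by
  by_cases hD : Subsingleton D
  · have hz : ∀ z : D, z = 0 := fun z => Subsingleton.elim z 0
    have hset : (A : Set D) ∩ Metric.closedBall 0 1 = (B : Set D) ∩ Metric.closedBall 0 1 := by
      ext z
      rw [hz z]
      exact ⟨fun _ => ⟨zero_mem B, Metric.mem_closedBall_self zero_le_one⟩,
        fun _ => ⟨zero_mem A, Metric.mem_closedBall_self zero_le_one⟩⟩
    rw [KKdist, hset, Metric.hausdorffDist_self_zero, hz (∑ i, u i * star (u i)), norm_zero,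
      zero_mul]
  haveI : Nontrivial D := not_subsingleton_iff_nontrivial.mp hD
  set w : D := ∑ i, u i * star (u i) with hw
  have hw0 : (0:ℝ) ≤ ‖w‖ := norm_nonneg _
  have hone : (1:ℝ) ≤ ‖w‖ := by
    have h := ECD.pimsner_popa' C u hu 1
    simp only [star_one, one_mul, ECD.map_fix 1 (one_mem C), CStarRing.norm_one, mul_one,
      one_pow] at h
    exact h
  have sqrtE_le : ∀ z : D, Real.sqrt ‖ECD.toFun (star z * z)‖ ≤ ‖z‖ := by
    intro z
    have h1 : ‖ECD.toFun (star z * z)‖ ≤ ‖z‖ ^ 2 := by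
      calc ‖ECD.toFun (star z * z)‖ ≤ ‖star z * z‖ := ECD.contractive _
        _ = ‖z‖ ^ 2 := by rw [CStarRing.norm_star_mul_self, sq]
    calc Real.sqrt ‖ECD.toFun (star z * z)‖ ≤ Real.sqrt (‖z‖ ^ 2) := Real.sqrt_le_sqrt h1
      _ = ‖z‖ := Real.sqrt_sq (norm_nonneg z)
  have PPb : ∀ z : D, ‖z‖ ≤ Real.sqrt ‖w‖ * Real.sqrt ‖ECD.toFun (star z * z)‖ := by
    intro z
    have h := ECD.pimsner_popa' C u hu z
    calc ‖z‖ = Real.sqrt (‖z‖ ^ 2) := (Real.sqrt_sq (norm_nonneg z)).symm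
      _ ≤ Real.sqrt (‖w‖ * ‖ECD.toFun (star z * z)‖) := Real.sqrt_le_sqrt h
      _ = Real.sqrt ‖w‖ * Real.sqrt ‖ECD.toFun (star z * z)‖ := Real.sqrt_mul hw0 _
  set S := {t : ℝ | ∃ x : D, Real.sqrt ‖ECD.toFun (star x * x)‖ ≤ 1 ∧
      t = Real.sqrt ‖ECD.toFun (star (EAD.toFun x - EBD.toFun x) *
        (EAD.toFun x - EBD.toFun x))‖} with hS
  have hbdd : BddAbove S := by
    refine ⟨2 * Real.sqrt ‖w‖, ?_⟩
    rintro t ⟨x, hx1, rfl⟩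
    have hxn : ‖x‖ ≤ Real.sqrt ‖w‖ := by
      calc ‖x‖ ≤ Real.sqrt ‖w‖ * Real.sqrt ‖ECD.toFun (star x * x)‖ := PPb x
        _ ≤ Real.sqrt ‖w‖ * 1 := mul_le_mul_of_nonneg_left hx1 (Real.sqrt_nonneg _)
        _ = Real.sqrt ‖w‖ := mul_one _
    calc Real.sqrt ‖ECD.toFun (star (EAD.toFun x - EBD.toFun x) * (EAD.toFun x - EBD.toFun x))‖
        ≤ ‖EAD.toFun x - EBD.toFun x‖ := sqrtE_le _
      _ ≤ ‖EAD.toFun x‖ + ‖EBD.toFun x‖ := norm_sub_le _ _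
      _ ≤ ‖x‖ + ‖x‖ := add_le_add (EAD.contractive x) (EBD.contractive x)
      _ ≤ Real.sqrt ‖w‖ + Real.sqrt ‖w‖ := add_le_add hxn hxn
      _ = 2 * Real.sqrt ‖w‖ := by ring
  have hJ0 : (0:ℝ) ≤ J := by
    rw [hJ]
    exact le_csSup hbdd ⟨0, by simp, by simp⟩
  have keybound : ∀ x : D, ‖x‖ ≤ 1 → ‖EAD.toFun x - EBD.toFun x‖ ≤ ‖w‖ * J := by
    intro x hx
    have hmem : Real.sqrt ‖ECD.toFun (star (EAD.toFun x - EBD.toFun x) *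
        (EAD.toFun x - EBD.toFun x))‖ ∈ S := ⟨x, (sqrtE_le x).trans hx, rfl⟩
    have ht : Real.sqrt ‖ECD.toFun (star (EAD.toFun x - EBD.toFun x) *
        (EAD.toFun x - EBD.toFun x))‖ ≤ J := hJ ▸ le_csSup hbdd hmem
    have hsw : Real.sqrt ‖w‖ ≤ ‖w‖ := by
      calc Real.sqrt ‖w‖ ≤ Real.sqrt (‖w‖ ^ 2) := Real.sqrt_le_sqrt (by nlinarith)
        _ = ‖w‖ := Real.sqrt_sq hw0
    calc ‖EAD.toFun x - EBD.toFun x‖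
        ≤ Real.sqrt ‖w‖ * Real.sqrt ‖ECD.toFun (star (EAD.toFun x - EBD.toFun x) *
            (EAD.toFun x - EBD.toFun x))‖ := PPb _
      _ ≤ Real.sqrt ‖w‖ * J := mul_le_mul_of_nonneg_left ht (Real.sqrt_nonneg _)
      _ ≤ ‖w‖ * J := mul_le_mul_of_nonneg_right hsw hJ0
  rw [KKdist]
  refine Metric.hausdorffDist_le_of_mem_dist (mul_nonneg hw0 hJ0) ?_ ?_
  · rintro a ⟨haA, hab⟩
    have ha1 : ‖a‖ ≤ 1 := mem_closedBall_zero_iff.mp hab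
    refine ⟨EBD.toFun a, ⟨EBD.mem_range a,
      mem_closedBall_zero_iff.mpr ((EBD.contractive a).trans ha1)⟩, ?_⟩
    rw [dist_eq_norm, show a - EBD.toFun a = EAD.toFun a - EBD.toFun a by
      rw [EAD.map_fix a haA]]
    exact keybound a ha1
  · rintro b ⟨hbB, hbb⟩
    have hb1 : ‖b‖ ≤ 1 := mem_closedBall_zero_iff.mp hbb
    refine ⟨EAD.toFun b, ⟨EAD.mem_range b,
      mem_closedBall_zero_iff.mpr ((EAD.contractive b).trans hb1)⟩, ?_⟩
    rw [dist_eq_norm, show b - EAD.toFun b = -(EAD.toFun b - EBD.toFun b) by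
      rw [EBD.map_fix b hbB]; abel, norm_neg]
    exact keybound b hb1
end
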